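/- Let α ≥ 2 and ℓ ≥ α be integers, and define the blow-up B(z,w) = (z·w^{α}, w²) as a polynomial map ℂ² → ℂ². Let F, G ∈ ℂ[[z,w]] be formal power series such that F(z,w) − z and G(z,w) − w both have order at least ℓ+1, and G(z,w) = w·(1 + Ψ(z,w)) for some Ψ of order ≥ ℓ. Then there exist unique formal power series F̂, Ĝ ∈ ℂ[[z,w]] such that F̂(z,w) − z and Ĝ(z,w) − w have order at least ℓ+1 and the identities Ĝ(z,w)² = G(B(z,w)) and F̂(z,w)·Ĝ(z,w)^{α} = F(B(z,w)) hold in ℂ[[z,w]]. -/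

import Mathlib

/-- Composition of multivariate formal power series: `f` in variables `σ` with
the substitution `g : σ → MvPowerSeries τ R`.  This gives the usual substitution
whenever each `g i` has zero constant term. -/
noncomputable def pscomp {σ τ : Type*} [Fintype σ] {R : Type*} [CommRing R]
    (f : MvPowerSeries σ R) (g : σ → MvPowerSeries τ R) : MvPowerSeries τ R :=
  letI := Classical.decEq σ
  fun d => MvPowerSeries.coeff (R := R) d
    (MvPolynomial.aeval g
      (MvPowerSeries.trunc R
        (Finsupp.equivFunOnFinite.symm fun _ => (d.sum fun _ n => n) + 1) f))

/-- `f` has order at least `r`: all monomials of total degree `< r` have zero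
coefficient. -/
def ordGE {σ : Type*} (f : MvPowerSeries σ ℂ) (r : ℕ) : Prop :=
  ∀ d : σ →₀ ℕ, (d.sum fun _ n => n) < r → MvPowerSeries.coeff (R := ℂ) d f = 0

/-! Substituting the blow-up `B` into `G = w (1 + Ψ)` gives `w² (1 + Φ)` with `Φ = Ψ ∘ B` of
positive order, so `Ĝ = w u` where `u = √(1 + Φ)` is the binomial series `(1 + X)^{1/2}` evaluated
at `Φ`. Every monomial `z^a w^b` of `F - z` has `a ≥ 1` or `2b ≥ 2(ℓ + 1) ≥ α`, so
`F ∘ B = z w^α + w^α E` with `E` of order `≥ ℓ + 1`, and `F̂ = (z + E) u^{-α}`.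
Conversely `Ĝ` is determined up to sign by `Ĝ²`, its linear term `w` fixes the sign, and `F̂` is
then obtained by cancelling `Ĝ^α ≠ 0` in the domain `ℂ[[z, w]]`. -/

open MvPowerSeries

theorem lt_equivFunOnFinite_symm_const {σ : Type*} [Fintype σ] [Nonempty σ] {e : σ →₀ ℕ} {c : ℕ}
    (he : e.degree < c) : e < Finsupp.equivFunOnFinite.symm fun _ => c := by
  refine lt_of_le_of_ne (fun i => (e.le_degree i).trans he.le) fun h => ?_
  have := (e.le_degree (Classical.arbitrary σ)).trans_lt he
  rw [h] at this
  simp at this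

theorem coeff_pscomp {σ τ R : Type*} [Fintype σ] [DecidableEq σ] [CommRing R]
    (f : MvPowerSeries σ R) (g : σ → MvPowerSeries τ R) (d : τ →₀ ℕ) :
    coeff d (pscomp f g) = coeff d (subst g (trunc R
      (Finsupp.equivFunOnFinite.symm fun _ => d.degree + 1) f : MvPowerSeries σ R)) := by
  rw [coeff_apply, subst_coe]
  simp only [pscomp]
  congr!

theorem pscomp_eq_subst {σ τ R : Type*} [Fintype σ] [Nonempty σ] [CommRing R]
    {g : σ → MvPowerSeries τ R} (hg : ∀ i, constantCoeff (g i) = 0) (f : MvPowerSeries σ R) :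
    pscomp f g = subst g f := by
  classical
  have hsubst := hasSubst_of_constantCoeff_zero hg
  ext d
  set c : σ →₀ ℕ := Finsupp.equivFunOnFinite.symm fun _ => d.degree + 1
  have htrunc : (d.degree + 1 : ℕ∞) ≤ (f - (trunc R c f : MvPowerSeries σ R)).order := by
    refine nat_le_order fun e he => ?_
    rw [map_sub, MvPolynomial.coeff_coe, coeff_trunc, if_pos (lt_equivFunOnFinite_symm_const he),
      sub_self]
  -- each `g i` has order `≥ 1`, so substitution does not lower the order
  have hlt : (d.degree : ℕ∞) < (subst g (f - (trunc R c f : MvPowerSeries σ R))).order := by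
    refine lt_of_lt_of_le ?_ (le_order_subst hsubst _)
    refine lt_of_lt_of_le ?_ (mul_le_mul' (le_iInf fun i =>
      (one_le_order_iff_constCoeff_eq_zero.mpr (hg i))) htrunc)
    rw [one_mul]
    exact_mod_cast Nat.lt_succ_self _
  have := coeff_of_lt_order hlt
  rw [subst_sub hsubst, map_sub, sub_eq_zero] at this
  rw [coeff_pscomp, this]

theorem ordGE_iff_le_order {σ : Type*} (f : MvPowerSeries σ ℂ) (r : ℕ) :
    ordGE f r ↔ (r : ℕ∞) ≤ f.order :=
  ⟨nat_le_order, fun h _ hd => coeff_of_lt_order (lt_of_lt_of_le (by exact_mod_cast hd) h)⟩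

section Order

variable {σ R : Type*}

theorem order_X_pow [CommRing R] [Nontrivial R] (s : σ) (n : ℕ) :
    (X s ^ n : MvPowerSeries σ R).order = n := by
  rw [X_pow_eq, order_monomial_of_ne_zero one_ne_zero, Finsupp.degree_single]

theorem add_one_le_order_X_mul_sub_X [CommRing R] {u : MvPowerSeries σ R} {n : ℕ∞} (s : σ)
    (hu : n ≤ (u - 1).order) : n + 1 ≤ (X s * u - X s).order := by
  rw [← mul_sub_one, add_comm]
  exact (add_le_add (one_le_order_iff_constCoeff_eq_zero.mpr (constantCoeff_X s)) hu).trans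
    le_order_mul

theorem order_sub_one_le_order_pow_sub_one [CommRing R] (u : MvPowerSeries σ R) (n : ℕ) :
    (u - 1).order ≤ (u ^ n - 1).order :=
  calc (u - 1).order ≤ (∑ i ∈ Finset.range n, u ^ i).order + (u - 1).order := le_add_self
    _ ≤ (u ^ n - 1).order := by rw [← geom_sum_mul]; exact le_order_mul

theorem order_sub_one_le_order_inv_sub_one {K : Type*} [Field K] {u : MvPowerSeries σ K}
    (hu : constantCoeff u ≠ 0) : (u - 1).order ≤ (u⁻¹ - 1).order :=
  calc (u - 1).order ≤ (-(u - 1)).order + (u⁻¹).order := by rw [order_neg]; exact le_self_add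
    _ ≤ (u⁻¹ - 1).order := by
      rw [show u⁻¹ - 1 = -(u - 1) * u⁻¹ by
        rw [neg_mul, sub_mul, MvPowerSeries.mul_inv_cancel u hu]; ring]
      exact le_order_mul

theorem coeff_single_eq_one_of_two_le_order_sub_X [CommRing R] {p : MvPowerSeries σ R} {s : σ}
    (hp : 2 ≤ (p - X s).order) : coeff (Finsupp.single s 1) p = 1 := by
  classical
  have := coeff_of_lt_order (d := Finsupp.single s 1) (lt_of_lt_of_le (by simp) hp)
  rwa [map_sub, coeff_X, if_pos rfl, sub_eq_zero] at this

theorem ne_zero_of_two_le_order_sub_X [CommRing R] [Nontrivial R] {p : MvPowerSeries σ R}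
    {s : σ} (hp : 2 ≤ (p - X s).order) : p ≠ 0 := fun h => by
  simpa [h] using coeff_single_eq_one_of_two_le_order_sub_X hp

theorem eq_of_sq_eq_sq_of_two_le_order_sub_X [CommRing R] [NoZeroDivisors R] [NeZero (2 : R)]
    {p q : MvPowerSeries σ R} {s : σ} (hp : 2 ≤ (p - X s).order) (hq : 2 ≤ (q - X s).order)
    (h : p ^ 2 = q ^ 2) : p = q := by
  refine (sq_eq_sq_iff_eq_or_eq_neg.mp h).resolve_right fun hpq => two_ne_zero (α := R) ?_
  have := coeff_single_eq_one_of_two_le_order_sub_X hp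
  rw [hpq, map_neg, coeff_single_eq_one_of_two_le_order_sub_X hq] at this
  linear_combination -this

theorem exists_sq_eq_one_add [CommRing R] [Algebra ℚ R]
    {Φ : MvPowerSeries σ R} (hΦ : constantCoeff Φ = 0) :
    ∃ u : MvPowerSeries σ R, u ^ 2 = 1 + Φ ∧ Φ.order ≤ (u - 1).order := by
  let φ := PowerSeries.substAlgHom (PowerSeries.HasSubst.of_constantCoeff_zero hΦ) (R := R)
  let b := PowerSeries.binomialSeries R (2⁻¹ : ℚ)
  have hb : b ^ 2 = 1 + PowerSeries.X := by
    rw [sq, ← PowerSeries.binomialSeries_add, show (2⁻¹ + 2⁻¹ : ℚ) = (1 : ℕ) by norm_num,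
      PowerSeries.binomialSeries_nat, pow_one]
  refine ⟨φ b, ?_, ?_⟩
  · rw [← map_pow, hb, map_add, map_one, PowerSeries.substAlgHom_X]
  · rw [← map_one φ, ← map_sub, PowerSeries.coe_substAlgHom]
    exact PowerSeries.le_order_subst_right hΦ (by simp [b])

end Order

section BlowUp

variable {R : Type*} [CommRing R] (α : ℕ)

variable (R) in
noncomputable def blowUp : Fin 2 → MvPowerSeries (Fin 2) R := ![X 0 * X 1 ^ α, X 1 ^ 2]

theorem constantCoeff_blowUp (i : Fin 2) : constantCoeff (blowUp R α i) = 0 := by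
  fin_cases i <;> simp [blowUp]

theorem hasSubst_blowUp : HasSubst (blowUp R α) :=
  hasSubst_of_constantCoeff_zero (constantCoeff_blowUp α)

theorem pscomp_blowUp (f : MvPowerSeries (Fin 2) R) :
    pscomp f ![X 0 * X 1 ^ α, X 1 ^ 2] = subst (blowUp R α) f :=
  pscomp_eq_subst (constantCoeff_blowUp α) f

theorem two_mul_order_le_order_subst_blowUp (hα : α ≠ 0) (f : MvPowerSeries (Fin 2) R) :
    2 * f.order ≤ (subst (blowUp R α) f).order := by
  refine le_trans (mul_le_mul_left (le_iInf fun i => ?_) _) (le_order_subst (hasSubst_blowUp α) f)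
  have hX (i : Fin 2) : 1 ≤ (X i : MvPowerSeries (Fin 2) R).order :=
    one_le_order_iff_constCoeff_eq_zero.mpr (constantCoeff_X i)
  fin_cases i
  · calc (2 : ℕ∞) ≤ 1 + α • 1 := by
          rw [nsmul_one]
          norm_cast
          omega
      _ ≤ _ := (add_le_add (hX 0) (nsmul_le_nsmul_right (hX 1) α)).trans
        ((add_le_add_right (le_order_pow _) _).trans le_order_mul)
  · calc (2 : ℕ∞) = 2 • 1 := by norm_num
      _ ≤ _ := (nsmul_le_nsmul_right (hX 1) 2).trans (le_order_pow _)

theorem X_pow_dvd_subst_blowUp {f : MvPowerSeries (Fin 2) R} {n : ℕ} (hf : (n : ℕ∞) ≤ f.order)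
    (hn : α ≤ 2 * n) : X 1 ^ α ∣ subst (blowUp R α) f := by
  refine X_pow_dvd_iff.mpr fun m hm => ?_
  rw [coeff_subst (hasSubst_blowUp α), finsum_eq_zero_of_forall_eq_zero]
  intro e
  by_cases he : coeff e f = 0
  · rw [he, zero_smul]
  have hdvd : X 1 ^ α ∣ e.prod fun s k => blowUp R α s ^ k := by
    rw [Finsupp.prod_fintype _ _ (fun _ => pow_zero _), Fin.prod_univ_two]
    by_cases h0 : e 0 = 0
    · have : n ≤ e 1 := by
        have := hf.trans (order_le he)
        rw [Finsupp.degree_eq_sum, Fin.sum_univ_two, h0, zero_add] at this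
        exact_mod_cast this
      refine Dvd.dvd.mul_left ?_ _
      rw [show blowUp R α 1 = X 1 ^ 2 from rfl, ← pow_mul]
      exact pow_dvd_pow _ (by omega)
    · exact Dvd.dvd.mul_right ((dvd_mul_left _ _).trans (dvd_pow_self _ h0)) _
  rw [X_pow_dvd_iff.mp hdvd m hm, smul_zero]

theorem exists_sq_eq_subst_blowUp [Algebra ℚ R] (hα : α ≠ 0) {Ψ : MvPowerSeries (Fin 2) R}
    (hΨ : constantCoeff Ψ = 0) :
    ∃ u : MvPowerSeries (Fin 2) R,
      (X 1 * u) ^ 2 = subst (blowUp R α) (X 1 * (1 + Ψ)) ∧ Ψ.order ≤ (u - 1).order := by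
  obtain ⟨u, hu, hu_order⟩ := exists_sq_eq_one_add
    (constantCoeff_subst_eq_zero (hasSubst_blowUp (R := R) α) (constantCoeff_blowUp α) hΨ)
  refine ⟨u, ?_, le_trans ?_ ((two_mul_order_le_order_subst_blowUp α hα Ψ).trans hu_order)⟩
  · rw [← coe_substAlgHom (hasSubst_blowUp α), map_mul, map_add, map_one, substAlgHom_X,
      coe_substAlgHom, mul_pow, hu]
    rfl
  · exact le_mul_of_one_le_left zero_le one_le_two

end BlowUp

theorem exists_mul_pow_eq_subst_blowUp {K : Type*} [Field K] {α ℓ : ℕ} (hα : α ≠ 0)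
    (hαℓ : α ≤ ℓ) {F u : MvPowerSeries (Fin 2) K} (hF : (ℓ + 1 : ℕ∞) ≤ (F - X 0).order)
    (hu : (ℓ : ℕ∞) ≤ (u - 1).order) :
    ∃ F' : MvPowerSeries (Fin 2) K,
      (ℓ + 1 : ℕ∞) ≤ (F' - X 0).order ∧ F' * (X 1 * u) ^ α = subst (blowUp K α) F := by
  obtain ⟨E, hE⟩ := X_pow_dvd_subst_blowUp α (n := ℓ + 1) (by exact_mod_cast hF) (by omega)
  have hE_order : (ℓ + 1 : ℕ∞) ≤ E.order := by
    have := two_mul_order_le_order_subst_blowUp α hα (F - X 0)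
    rw [hE, order_mul, order_X_pow] at this
    have h : (α + (ℓ + 1) : ℕ∞) ≤ 2 * (ℓ + 1) := by norm_cast; omega
    exact (ENat.add_le_add_iff_left (ENat.natCast_ne_top α)).mp
      (h.trans ((mul_le_mul' le_rfl hF).trans this))
  have hu1 : constantCoeff u = 1 := by
    have := one_le_order_iff_constCoeff_eq_zero.mp (le_trans (by norm_cast; omega) hu)
    rwa [map_sub, map_one, sub_eq_zero] at this
  have hu0 : constantCoeff (u ^ α) ≠ 0 := by
    rw [map_pow, hu1, one_pow]
    exact one_ne_zero
  refine ⟨(X 0 + E) * (u ^ α)⁻¹, ?_, ?_⟩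
  · have hw : (ℓ : ℕ∞) ≤ ((u ^ α)⁻¹ - 1).order := hu.trans
      ((order_sub_one_le_order_pow_sub_one u α).trans (order_sub_one_le_order_inv_sub_one hu0))
    rw [show (X 0 + E) * (u ^ α)⁻¹ - X 0 = (X 0 * (u ^ α)⁻¹ - X 0) + E * (u ^ α)⁻¹ by ring]
    exact le_trans (le_min (add_one_le_order_X_mul_sub_X 0 hw)
      ((hE_order.trans le_self_add).trans le_order_mul)) min_order_le_add
  · calc (X 0 + E) * (u ^ α)⁻¹ * (X 1 * u) ^ α
        = X 0 * X 1 ^ α + X 1 ^ α * E := by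
          rw [mul_pow]
          linear_combination (X 0 + E) * X 1 ^ α * MvPowerSeries.mul_inv_cancel _ hu0
      _ = subst (blowUp K α) F := by
        rw [← hE, ← coe_substAlgHom (hasSubst_blowUp α), map_sub, substAlgHom_X,
          show blowUp K α 0 = X 0 * X 1 ^ α from rfl, add_sub_cancel]

theorem stmt13_general (α ℓ : ℕ) (hα : 2 ≤ α) (hℓ : α ≤ ℓ)
    (F G Ψ : MvPowerSeries (Fin 2) ℂ)
    (hF : ordGE (F - MvPowerSeries.X 0) (ℓ + 1))
    (hΨ : ordGE Ψ ℓ)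
    (hGform : G = MvPowerSeries.X 1 * (1 + Ψ)) :
    ∃! p : MvPowerSeries (Fin 2) ℂ × MvPowerSeries (Fin 2) ℂ,
      ordGE (p.1 - MvPowerSeries.X 0) (ℓ + 1) ∧
      ordGE (p.2 - MvPowerSeries.X 1) (ℓ + 1) ∧
      p.2 ^ 2 = pscomp G ![MvPowerSeries.X 0 * MvPowerSeries.X 1 ^ α,
        MvPowerSeries.X 1 ^ 2] ∧
      p.1 * p.2 ^ α = pscomp F ![MvPowerSeries.X 0 * MvPowerSeries.X 1 ^ α,
        MvPowerSeries.X 1 ^ 2] := by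
  subst hGform
  simp only [ordGE_iff_le_order, pscomp_blowUp, Nat.cast_add, Nat.cast_one] at hF hΨ ⊢
  have hΨ0 : constantCoeff Ψ = 0 :=
    one_le_order_iff_constCoeff_eq_zero.mp (le_trans (by exact_mod_cast (by omega : 1 ≤ ℓ)) hΨ)
  obtain ⟨u, hu_sq, hu⟩ := exists_sq_eq_subst_blowUp α (by omega) hΨ0
  obtain ⟨F', hF', hF'_eq⟩ := exists_mul_pow_eq_subst_blowUp (by omega) hℓ hF (hΨ.trans hu)
  have hG' := add_one_le_order_X_mul_sub_X 1 (hΨ.trans hu)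
  refine ⟨(F', X 1 * u), ⟨hF', hG', hu_sq, hF'_eq⟩, ?_⟩
  rintro ⟨F₁, G₁⟩ ⟨-, hG₁, hG₁_sq, hF₁_eq⟩
  have two_le : (2 : ℕ∞) ≤ ℓ + 1 := by exact_mod_cast (by omega : 2 ≤ ℓ + 1)
  obtain rfl : G₁ = X 1 * u := eq_of_sq_eq_sq_of_two_le_order_sub_X
    (two_le.trans hG₁) (two_le.trans hG') (hG₁_sq.trans hu_sq.symm)
  have hG_ne : X 1 * u ≠ 0 := ne_zero_of_two_le_order_sub_X (two_le.trans hG')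
  exact Prod.ext (mul_right_cancel₀ (pow_ne_zero α hG_ne) (hF₁_eq.trans hF'_eq.symm)) rfl

/-- Lifting a formal map `(F,G)` through the blow-up `B(z,w) = (z w^α, w²)`,
with control of jets (Proposition 5.2, case `n = 1`):  there exist unique
`F̂, Ĝ` agreeing with `(z,w)` to order `ℓ` such that `Ĝ² = G∘B` and
`F̂·Ĝ^α = F∘B`.  Here `Fin 2 = (z,w)`, `X 0 = z`, `X 1 = w`. -/
theorem stmt13 (α ℓ : ℕ) (hα : 2 ≤ α) (hℓ : α ≤ ℓ)
    (F G Ψ : MvPowerSeries (Fin 2) ℂ)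
    (hF : ordGE (F - MvPowerSeries.X 0) (ℓ + 1))
    (hG : ordGE (G - MvPowerSeries.X 1) (ℓ + 1))
    (hΨ : ordGE Ψ ℓ)
    (hGform : G = MvPowerSeries.X 1 * (1 + Ψ)) :
    ∃! p : MvPowerSeries (Fin 2) ℂ × MvPowerSeries (Fin 2) ℂ,
      ordGE (p.1 - MvPowerSeries.X 0) (ℓ + 1) ∧
      ordGE (p.2 - MvPowerSeries.X 1) (ℓ + 1) ∧
      p.2 ^ 2 = pscomp G ![MvPowerSeries.X 0 * MvPowerSeries.X 1 ^ α,
        MvPowerSeries.X 1 ^ 2] ∧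
      p.1 * p.2 ^ α = pscomp F ![MvPowerSeries.X 0 * MvPowerSeries.X 1 ^ α,
        MvPowerSeries.X 1 ^ 2] :=
  stmt13_general α ℓ hα hℓ F G Ψ hF hΨ hGform
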